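/- Let y₁² = y₂² = 1/3. Then for every t ∈ ℝ, E(t) = (1/3)·(2t² + 2t − 1)³. In particular, the polynomial E has exactly two distinct complex roots, namely (−1+√3)/2 and (−1−√3)/2, each real of multiplicity 3. -/

import Mathlib

/-! At the cuspidal point `y₁² = y₂² = 1/3` the sextic `E` collapses to `(1/3)(2t² + 2t - 1)³`, a
nonzero constant times the cube of `(t - α)(t - β)` with `α ≠ β` the roots `(-1 ± √3)/2` of the
quadratic; the root set and the multiplicities are then read off this factorization. -/

open Polynomial

/-- The polynomial `E(t)` as a real-valued function. -/
def EFun (y₁ y₂ t : ℝ) : ℝ :=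
  y₁^2 * (t^2 + 4*t + 1)^3 + y₂^2 * (t^2 - 2*t - 2)^3
    + 2*t^6 + 6*t^5 - 15*t^4 - 40*t^3 - 15*t^2 + 6*t + 2

/-- The polynomial `E` viewed over ℂ. -/
noncomputable def EPoly (y₁ y₂ : ℝ) : Polynomial ℂ :=
  C ((y₁ : ℂ)^2) * (X^2 + 4*X + 1)^3 + C ((y₂ : ℂ)^2) * (X^2 - 2*X - 2)^3
    + 2*X^6 + 6*X^5 - 15*X^4 - 40*X^3 - 15*X^2 + 6*X + 2

theorem rootMultiplicity_C_mul_pow_X_sub_C_mul_X_sub_C {R : Type*} [CommRing R] [IsDomain R]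
    {a b c : R} (hc : c ≠ 0) (hab : a ≠ b) (n : ℕ) :
    (C c * ((X - C a) * (X - C b)) ^ n).rootMultiplicity a = n := by
  have hb : ¬ ((X - C b) ^ n).IsRoot a := by
    simp [sub_eq_zero, hab]
  have hne : ((X - C a) ^ n * (X - C b) ^ n : R[X]) ≠ 0 :=
    mul_ne_zero (pow_ne_zero _ (X_sub_C_ne_zero a)) (pow_ne_zero _ (X_sub_C_ne_zero b))
  rw [mul_pow, rootMultiplicity_mul (mul_ne_zero (C_ne_zero.mpr hc) hne),
    rootMultiplicity_mul hne, rootMultiplicity_C, rootMultiplicity_X_sub_C_pow,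
    rootMultiplicity_eq_zero hb, zero_add, add_zero]

theorem isRoot_C_mul_pow_X_sub_C_mul_X_sub_C_iff {R : Type*} [CommRing R] [NoZeroDivisors R]
    {a b c : R} (hc : c ≠ 0) {n : ℕ} (hn : n ≠ 0) (z : R) :
    (C c * ((X - C a) * (X - C b)) ^ n).IsRoot z ↔ z = a ∨ z = b := by
  simp [hc, hn, sub_eq_zero]

theorem EFun_eq_of_sq_eq {y₁ y₂ : ℝ} (h1 : y₁ ^ 2 = 1 / 3) (h2 : y₂ ^ 2 = 1 / 3) (t : ℝ) :
    EFun y₁ y₂ t = 1 / 3 * (2 * t ^ 2 + 2 * t - 1) ^ 3 := by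
  rw [EFun, h1, h2]
  ring

theorem EPoly_eq_of_sq_eq {y₁ y₂ : ℝ} (h1 : y₁ ^ 2 = 1 / 3) (h2 : y₂ ^ 2 = 1 / 3) :
    EPoly y₁ y₂ = C (8 / 3 : ℂ) * ((X - C (((-1 + √3) / 2 : ℝ) : ℂ)) *
      (X - C (((-1 - √3) / 2 : ℝ) : ℂ))) ^ 3 := by
  have hy1 : (y₁ : ℂ) ^ 2 = 1 / 3 := by rw [← Complex.ofReal_pow, h1]; norm_num
  have hy2 : (y₂ : ℂ) ^ 2 = 1 / 3 := by rw [← Complex.ofReal_pow, h2]; norm_num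
  have hroots (z : ℂ) : (z - (((-1 + √3) / 2 : ℝ) : ℂ)) * (z - (((-1 - √3) / 2 : ℝ) : ℂ))
      = z ^ 2 + z - 1 / 2 := by
    have h3 : ((√3 : ℝ) : ℂ) ^ 2 = 3 := by exact_mod_cast Real.sq_sqrt (by norm_num : (0 : ℝ) ≤ 3)
    push_cast
    linear_combination (-1 / 4 : ℂ) * h3
  refine Polynomial.funext fun z => ?_
  simp only [EPoly, eval_add, eval_sub, eval_mul, eval_pow, eval_C, eval_X, eval_ofNat, eval_one,
    hy1, hy2, hroots]
  ring

theorem stmt_7 (y₁ y₂ : ℝ) (h1 : y₁^2 = 1/3) (h2 : y₂^2 = 1/3) :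
    (∀ t : ℝ, EFun y₁ y₂ t = (1/3) * (2*t^2 + 2*t - 1)^3) ∧
    {z : ℂ | (EPoly y₁ y₂).IsRoot z}
      = {((((-1 + Real.sqrt 3) / 2 : ℝ)) : ℂ), ((((-1 - Real.sqrt 3) / 2 : ℝ)) : ℂ)} ∧
    (EPoly y₁ y₂).rootMultiplicity ((((-1 + Real.sqrt 3) / 2 : ℝ)) : ℂ) = 3 ∧
    (EPoly y₁ y₂).rootMultiplicity ((((-1 - Real.sqrt 3) / 2 : ℝ)) : ℂ) = 3 := by
  have hne : (((-1 + √3) / 2 : ℝ) : ℂ) ≠ (((-1 - √3) / 2 : ℝ) : ℂ) := by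
    rw [Ne, Complex.ofReal_inj]
    have : (0 : ℝ) < √3 := by positivity
    intro h; linarith
  have hc : (8 / 3 : ℂ) ≠ 0 := by norm_num
  rw [EPoly_eq_of_sq_eq h1 h2]
  refine ⟨EFun_eq_of_sq_eq h1 h2, ?_, ?_, ?_⟩
  · ext z
    exact isRoot_C_mul_pow_X_sub_C_mul_X_sub_C_iff hc three_ne_zero z
  · exact rootMultiplicity_C_mul_pow_X_sub_C_mul_X_sub_C hc hne 3
  · rw [mul_comm (X - C _)]
    exact rootMultiplicity_C_mul_pow_X_sub_C_mul_X_sub_C hc hne.symm 3
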